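/- arXiv:1902.06441 — 2 statements merged into one kernel-verified Lean document; each statement's English description precedes it below -/
import Mathlib

section
/- Let α ∈ (0,1), let n ≥ 4, let λ ∈ (0,∞)^p and μ ∈ (0,∞)^q be fixed bandwidths, and let B ≥ 1. Let Π_1,…,Π_B be i.i.d. random permutations of {1,…,n}, uniformly distributed on the symmetric group and independent of the sample Z_n = (X_i,Y_i)_{1≤i≤n}. For 1 ≤ b ≤ B set Ĥ^{⋆b} = ĤSIC_{λ,μ}((X_i, Y_{Π_b(i)})_{1≤i≤n}), set Ĥ^{⋆(B+1)} = ĤSIC_{λ,μ}(Z_n), and let q̂_{1−α}^{λ,μ} be the ⌈(B+1)(1−α)⌉-th smallest value among Ĥ^{⋆1},…,Ĥ^{⋆(B+1)}. Then, if the joint density of the sample factorizes as f = f_1 ⊗ f_2 (i.e., under the null hypothesis of independence), the probability that ĤSIC_{λ,μ}(Z_n) > q̂_{1−α}^{λ,μ} is at most α, for every B. -/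
open MeasureTheory ProbabilityTheory Real
open scoped BigOperators ENNReal NNReal

noncomputable section

/-- The standard Gaussian density on `ℝ^d`. -/
def gaussDensity (d : ℕ) (x : Fin d → ℝ) : ℝ :=
  (Real.sqrt (2 * π))⁻¹ ^ d * Real.exp (-(∑ i, (x i) ^ 2) / 2)

/-- The function `φ_λ` associated with a bandwidth vector `λ`. -/
def phiBW {d : ℕ} (lam : Fin d → ℝ) (x : Fin d → ℝ) : ℝ :=
  (∏ i, lam i)⁻¹ * gaussDensity d (fun i => x i / lam i)

/-- The Gaussian kernel with bandwidth `λ`. -/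
def gaussKernel {d : ℕ} (lam : Fin d → ℝ) (x x' : Fin d → ℝ) : ℝ :=
  phiBW lam (x - x')

/-- The HSIC estimator `ĤSIC_{λ,μ}` of a sample. -/
def HSICest (p q n : ℕ) (lam : Fin p → ℝ) (mu : Fin q → ℝ)
    (Z : Fin n → (Fin p → ℝ) × (Fin q → ℝ)) : ℝ :=
  ((n * (n-1) : ℕ) : ℝ)⁻¹ *
    ∑ i, ∑ j, (if i ≠ j then
      gaussKernel lam (Z i).1 (Z j).1 * gaussKernel mu (Z i).2 (Z j).2 else 0)
  + ((n * (n-1) * (n-2) * (n-3) : ℕ) : ℝ)⁻¹ *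
    ∑ i, ∑ j, ∑ r, ∑ s, (if i ≠ j ∧ i ≠ r ∧ i ≠ s ∧ j ≠ r ∧ j ≠ s ∧ r ≠ s then
      gaussKernel lam (Z i).1 (Z j).1 * gaussKernel mu (Z r).2 (Z s).2 else 0)
  - 2 * ((n * (n-1) * (n-2) : ℕ) : ℝ)⁻¹ *
    ∑ i, ∑ j, ∑ r, (if i ≠ j ∧ i ≠ r ∧ j ≠ r then
      gaussKernel lam (Z i).1 (Z j).1 * gaussKernel mu (Z j).2 (Z r).2 else 0)

/-- The measure with density `f` w.r.t. Lebesgue measure. -/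
def densMeasure {E : Type*} [MeasureSpace E] (f : E → ℝ) : Measure E :=
  volume.withDensity fun z => ENNReal.ofReal (f z)

/-- The law `P_f` of an i.i.d. `n`-sample with common density `f`. -/
def sampleLaw (n : ℕ) {E : Type*} [MeasureSpace E] (f : E → ℝ) : Measure (Fin n → E) :=
  Measure.pi fun _ => densMeasure f

/-- The `(1-a)`-quantile of `T` under `P`. -/
def quantile {Ω : Type*} [MeasurableSpace Ω] (P : Measure Ω) (T : Ω → ℝ) (a : ℝ) : ℝ :=
  sInf {t : ℝ | ENNReal.ofReal (1 - a) ≤ P {ω | T ω ≤ t}}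

/-- `f` is a joint probability density on `ℝ^p × ℝ^q` with marginals `f1` and `f2`. -/
structure IsJointDensity (p q : ℕ) (f : (Fin p → ℝ) × (Fin q → ℝ) → ℝ)
    (f1 : (Fin p → ℝ) → ℝ) (f2 : (Fin q → ℝ) → ℝ) : Prop where
  meas : Measurable f
  nonneg : ∀ z, 0 ≤ f z
  int_one : ∫ z, f z = 1
  marg1 : ∀ x, f1 x = ∫ y, f (x, y)
  marg2 : ∀ y, f2 y = ∫ x, f (x, y)

/-- The population HSIC `HSIC_{λ,μ}(f)`. -/
def HSICpop (p q : ℕ) (lam : Fin p → ℝ) (mu : Fin q → ℝ)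
    (f : (Fin p → ℝ) × (Fin q → ℝ) → ℝ) (f1 : (Fin p → ℝ) → ℝ) (f2 : (Fin q → ℝ) → ℝ) : ℝ :=
  (∫ z, ∫ z', gaussKernel lam z.1 z'.1 * gaussKernel mu z.2 z'.2 * (f z * f z'))
  + (∫ x, ∫ x', gaussKernel lam x x' * (f1 x * f1 x')) *
    (∫ y, ∫ y', gaussKernel mu y y' * (f2 y * f2 y'))
  - 2 * ∫ z, (∫ x', gaussKernel lam z.1 x' * f1 x') *
      (∫ y', gaussKernel mu z.2 y' * f2 y') * f z


/-- Discrete σ-algebra on the group of permutations of `Fin n`. -/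
instance instMSPerm (n : ℕ) : MeasurableSpace (Equiv.Perm (Fin n)) := ⊤

/-- The `k`-th smallest value (`1`-indexed) among `v 1, …, v m`. -/
def kthSmallest {m : ℕ} (v : Fin m → ℝ) (k : ℕ) : ℝ :=
  sInf {t : ℝ | k ≤ (Finset.univ.filter fun b => v b ≤ t).card}

/-!
Under independence the law of the sample is invariant under permuting the `Y`-coordinates.
Since the `Π_b` are i.i.d. uniform and independent of the sample, re-centring all permutations
at `Π_c` then exchanges the observed statistic with the `c`-th permuted one, so the statistics
`Ĥ^{⋆1}, …, Ĥ^{⋆(B+1)}` are exchangeable and the probability that slot `c` lies strictly above the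
`k`-th smallest value does not depend on `c`. At most `B + 1 - k` slots can lie strictly above
it, so `(B + 1) P(reject) ≤ B + 1 - k ≤ (B + 1) α` for `k = ⌈(B + 1)(1 - α)⌉`.
-/

open Finset

section KthSmallest

variable {m k : ℕ} {v : Fin m → ℝ}

theorem kthSmallest_comp_perm (v : Fin m → ℝ) (τ : Equiv.Perm (Fin m)) (k : ℕ) :
    kthSmallest (v ∘ τ) k = kthSmallest v k := by
  unfold kthSmallest
  congr! 4 with t
  exact card_equiv τ (by simp)

theorem exists_apply_le_of_le_card_filter (hk : 1 ≤ k) {t : ℝ} (ht : k ≤ #{c | v c ≤ t}) :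
    ∃ b, k ≤ #{c | v c ≤ v b} ∧ v b ≤ t := by
  obtain ⟨b, hb, hmax⟩ := exists_max_image {c | v c ≤ t} v (card_pos.mp (by omega))
  refine ⟨b, ht.trans (card_le_card fun c hc => ?_), (mem_filter.mp hb).2⟩
  simpa using hmax c hc

theorem kthSmallest_le (hk : 1 ≤ k) {t : ℝ} (ht : k ≤ #{c | v c ≤ t}) : kthSmallest v k ≤ t := by
  refine csInf_le ⟨univ.inf' ?_ v, fun s hs => ?_⟩ ht
  · obtain ⟨b, -, -⟩ := exists_apply_le_of_le_card_filter hk ht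
    exact ⟨b, mem_univ b⟩
  · obtain ⟨b, -, hb⟩ := exists_apply_le_of_le_card_filter hk hs
    exact (inf'_le v (mem_univ b)).trans hb

theorem le_card_filter_le_kthSmallest (hk : 1 ≤ k) (hkm : k ≤ m) :
    k ≤ #{c | v c ≤ kthSmallest v k} := by
  have hgood : ({b | k ≤ #{c | v c ≤ v b}} : Finset (Fin m)).Nonempty := by
    have hm : 0 < m := by omega
    obtain ⟨b, hb, -⟩ := exists_apply_le_of_le_card_filter (v := v) hk
      (t := univ.sup' (univ_nonempty_iff.mpr ⟨⟨0, hm⟩⟩) v)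
      (by rw [filter_true_of_mem fun c _ => le_sup' v (mem_univ c)]; simpa using hkm)
    exact ⟨b, by simpa using hb⟩
  obtain ⟨b₀, hb₀, hmin⟩ := exists_min_image _ v hgood
  have hb₀ : k ≤ #{c | v c ≤ v b₀} := (mem_filter.mp hb₀).2
  suffices kthSmallest v k = v b₀ by rwa [this]
  refine le_antisymm (kthSmallest_le hk hb₀) (le_csInf ⟨_, hb₀⟩ fun t ht => ?_)
  obtain ⟨b, hb, hbt⟩ := exists_apply_le_of_le_card_filter hk ht
  exact (hmin b (by simpa using hb)).trans hbt

theorem kthSmallest_lt_iff (hk : 1 ≤ k) (hkm : k ≤ m) {a : ℝ} :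
    kthSmallest v k < a ↔ k ≤ #{c | v c < a} := by
  constructor
  · intro h
    refine (le_card_filter_le_kthSmallest (v := v) hk hkm).trans (card_le_card fun c hc => ?_)
    simp only [mem_filter, mem_univ, true_and] at hc ⊢
    exact hc.trans_lt h
  · intro h
    obtain ⟨b, hb, hba⟩ := exists_max_image {c | v c < a} v (card_pos.mp (by omega))
    refine (kthSmallest_le hk (h.trans (card_le_card fun c hc => ?_))).trans_lt (mem_filter.mp hb).2
    simp only [mem_filter, mem_univ, true_and] at hc ⊢
    exact hba c (by simpa using hc)

theorem card_filter_kthSmallest_lt_le (hk : 1 ≤ k) (hkm : k ≤ m) :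
    #{c | kthSmallest v k < v c} ≤ m - k := by
  have := card_filter_add_card_filter_not (s := univ)
    (p := fun c => v c ≤ kthSmallest v k)
  simp only [not_le, card_univ, Fintype.card_fin] at this
  have := le_card_filter_le_kthSmallest (v := v) hk hkm
  omega

theorem measurableSet_kthSmallest_lt (hk : 1 ≤ k) (hkm : k ≤ m) (c : Fin m) :
    MeasurableSet {v : Fin m → ℝ | kthSmallest v k < v c} := by
  simp_rw [kthSmallest_lt_iff hk hkm, card_filter]
  refine measurableSet_le measurable_const (Finset.measurable_sum _ fun b _ => ?_)
  exact Measurable.ite (measurableSet_lt (measurable_pi_apply b) (measurable_pi_apply c))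
    measurable_const measurable_const

end KthSmallest

theorem mul_measure_kthSmallest_lt_le {Ω : Type*} [MeasurableSpace Ω] (P : Measure Ω)
    [IsProbabilityMeasure P] {m k : ℕ} (hk : 1 ≤ k) (hkm : k ≤ m) {V : Ω → Fin m → ℝ}
    (hV : Measurable V) (c₀ : Fin m)
    (hexch : ∀ c, P {ω | kthSmallest (V ω) k < V ω c} = P {ω | kthSmallest (V ω) k < V ω c₀}) :
    (m : ℝ≥0∞) * P {ω | kthSmallest (V ω) k < V ω c₀} ≤ (m - k : ℕ) := by
  set A : Fin m → Set Ω := fun c => {ω | kthSmallest (V ω) k < V ω c}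
  have hA : ∀ c, MeasurableSet (A c) := fun c => hV (measurableSet_kthSmallest_lt hk hkm c)
  have hcount : ∀ ω, ∑ c, (A c).indicator 1 ω ≤ ((m - k : ℕ) : ℝ≥0∞) := fun ω => by
    have := card_filter_kthSmallest_lt_le (v := V ω) hk hkm
    simp only [Set.indicator_apply, Pi.one_apply, Finset.sum_boole, A, Set.mem_ofPred_eq]
    exact_mod_cast this
  calc (m : ℝ≥0∞) * P (A c₀) = ∑ c, P (A c) := by simp [hexch, A]
    _ = ∫⁻ ω, ∑ c, (A c).indicator 1 ω ∂P := by
      rw [lintegral_finsetSum _ fun c _ => measurable_one.indicator (hA c)]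
      simp_rw [lintegral_indicator_one (hA _)]
    _ ≤ ∫⁻ _, ((m - k : ℕ) : ℝ≥0∞) ∂P := lintegral_mono hcount
    _ = (m - k : ℕ) := by simp

theorem measure_mem_eq_sum_of_iIndepFun {Ω ι G E : Type*} [MeasurableSpace Ω]
    {P : Measure Ω} [Fintype ι] [DecidableEq ι] [Fintype G] [MeasurableSpace G]
    [MeasurableSingletonClass G] [MeasurableSpace E] {X : ι → Ω → G} {Z : Ω → E} (hX : ∀ i, Measurable (X i))
    (hZ : Measurable Z) (hXiid : iIndepFun X P) {u : ℝ≥0∞}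
    (hXlaw : ∀ i g, P {ω | X i ω = g} = u) (hXZ : IndepFun (fun ω i => X i ω) Z P)
    {S : (ι → G) → Set E} (hS : ∀ x, MeasurableSet (S x)) :
    P {ω | Z ω ∈ S fun i => X i ω} = u ^ Fintype.card ι * ∑ x, P.map Z (S x) := by
  set X' : Ω → ι → G := fun ω i => X i ω
  have hX' : Measurable X' := measurable_pi_lambda _ hX
  have hpiece : ∀ x, MeasurableSet (X' ⁻¹' {x} ∩ Z ⁻¹' S x) := fun x =>
    (hX' (measurableSet_singleton x)).inter (hZ (hS x))
  have hunion : {ω | Z ω ∈ S (X' ω)} = ⋃ x, X' ⁻¹' {x} ∩ Z ⁻¹' S x := by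
    ext ω; simp
  have hfiber : ∀ x, P (X' ⁻¹' {x}) = u ^ Fintype.card ι := fun x => by
    have : X' ⁻¹' {x} = ⋂ i, X i ⁻¹' {x i} := by ext ω; simp [X', funext_iff]
    rw [this, hXiid.meas_iInter fun i => ⟨{x i}, measurableSet_singleton _, rfl⟩]
    simp_rw [Set.preimage, Set.mem_singleton_iff, hXlaw, Finset.prod_const, Finset.card_univ]
  rw [hunion, measure_iUnion ((pairwise_disjoint_fiber X').mono fun _ _ h =>
    h.mono Set.inter_subset_left Set.inter_subset_left) hpiece, tsum_fintype, Finset.mul_sum]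
  refine Finset.sum_congr rfl fun x _ => ?_
  rw [hXZ.measure_inter_preimage_eq_mul _ _ (measurableSet_singleton x) (hS x), hfiber,
    Measure.map_apply hZ (hS x)]

section PermuteSnd

variable {ι α β : Type*}

def permuteSnd (σ : Equiv.Perm ι) (z : ι → α × β) : ι → α × β :=
  fun i => ((z i).1, (z (σ i)).2)

theorem measurePreserving_permuteSnd [Fintype ι] [MeasurableSpace α] [MeasurableSpace β]
    (μ : Measure α) (ν : Measure β) [SigmaFinite μ] [SigmaFinite ν] (σ : Equiv.Perm ι) :
    MeasurePreserving (permuteSnd σ) (Measure.pi fun _ : ι => μ.prod ν)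
      (Measure.pi fun _ : ι => μ.prod ν) := by
  have he := measurePreserving_arrowProdEquivProdArrow α β ι (fun _ => μ) (fun _ => ν)
  have hσ : MeasurePreserving (MeasurableEquiv.arrowCongr' σ.symm (MeasurableEquiv.refl β))
      (Measure.pi fun _ : ι => ν) (Measure.pi fun _ : ι => ν) :=
    measurePreserving_arrowCongr' _ _ _ _ fun _ => MeasurePreserving.id ν
  exact he.symm.comp (((MeasurePreserving.id _).prod hσ).comp he)

def permStats {m : ℕ} (T : (ι → α × β) → ℝ) (ρ : Fin m → Equiv.Perm ι) (z : ι → α × β) :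
    Fin m → ℝ :=
  fun b => T (permuteSnd (ρ b) z)

theorem permStats_permuteSnd {m : ℕ} (T : (ι → α × β) → ℝ) (ρ : Fin m → Equiv.Perm ι)
    (σ : Equiv.Perm ι) (z : ι → α × β) :
    permStats T ρ (permuteSnd σ z) = permStats T (fun b => σ * ρ b) z := rfl

theorem permStats_snoc_one {B : ℕ} (T : (ι → α × β) → ℝ) (x : Fin B → Equiv.Perm ι)
    (z : ι → α × β) :
    permStats T (Fin.snoc x 1) z =
      fun b : Fin (B + 1) => if h : (b : ℕ) < B then T (permuteSnd (x ⟨b, h⟩) z) else T z := by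
  funext b
  simp only [permStats, Fin.snoc]
  split_ifs <;> rfl

theorem measurable_permStats [MeasurableSpace α] [MeasurableSpace β] {m : ℕ}
    {T : (ι → α × β) → ℝ} (hT : Measurable T) (ρ : Fin m → Equiv.Perm ι) :
    Measurable (permStats T ρ) :=
  measurable_pi_lambda _ fun b => hT.comp (measurable_pi_lambda _ fun i =>
    (measurable_pi_apply i).fst.prodMk (measurable_pi_apply (ρ b i)).snd)

end PermuteSnd

section Rebase

variable {G : Type*} [Group G] {B : ℕ}

-- Re-centring at `x c` makes slot `c` the identity slot, i.e. exchanges the roles of the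
-- observed sample and the `c`-th permuted one.
def rebase (c : Fin B) (x : Fin B → G) : Fin B → G :=
  fun b => (x c)⁻¹ * Function.update x c 1 b

theorem rebase_involutive [DecidableEq G] (c : Fin B) :
    Function.Involutive (rebase (G := G) c) := by
  intro x
  funext b
  by_cases hb : b = c
  · subst hb; simp [rebase]
  · simp [rebase, hb]

theorem snoc_comp_swap_rebase (c : Fin B) (x : Fin B → G) :
    (fun b => (x c)⁻¹ * Fin.snoc (α := fun _ => G) x 1 b) ∘ Equiv.swap c.castSucc (Fin.last B) =
      Fin.snoc (α := fun _ => G) (rebase c x) 1 := by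
  funext b
  induction b using Fin.lastCases with
  | last => simp
  | cast b =>
    by_cases hb : b = c
    · subst hb; simp [rebase]
    · simp [rebase, hb, Equiv.swap_apply_of_ne_of_ne, Fin.castSucc_ne_last]

end Rebase

section PermutationTest

variable {ι α β : Type*} [Fintype ι] [DecidableEq ι] [MeasurableSpace α] [MeasurableSpace β]
  {B : ℕ} {T : (ι → α × β) → ℝ}

theorem sum_measure_permStats_snoc_comp_swap {Q : Measure (ι → α × β)}
    (hQ : ∀ σ, MeasurePreserving (permuteSnd σ) Q Q) (hT : Measurable T)
    {S : Set (Fin (B + 1) → ℝ)} (hS : MeasurableSet S) (c : Fin B) :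
    ∑ x : Fin B → Equiv.Perm ι,
        Q {z | permStats T (Fin.snoc x 1) z ∘ Equiv.swap c.castSucc (Fin.last B) ∈ S} =
      ∑ x : Fin B → Equiv.Perm ι, Q {z | permStats T (Fin.snoc x 1) z ∈ S} := by
  refine Fintype.sum_bijective (rebase c) (rebase_involutive c).bijective _ _ fun x => ?_
  have hmeas : MeasurableSet
      {z | permStats T (Fin.snoc x 1) z ∘ Equiv.swap c.castSucc (Fin.last B) ∈ S} :=
    ((measurable_pi_lambda _ fun _ => measurable_pi_apply _).comp (measurable_permStats hT _)) hS
  rw [← (hQ (x c)⁻¹).measure_preimage hmeas.nullMeasurableSet]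
  congr 1
  ext z
  simp only [Set.mem_preimage, Set.mem_ofPred_eq, permStats_permuteSnd]
  rw [← snoc_comp_swap_rebase]
  rfl

variable [MeasurableSpace (Equiv.Perm ι)] [MeasurableSingletonClass (Equiv.Perm ι)]
  {Ω : Type*} [MeasurableSpace Ω] {P : Measure Ω} {X : Fin B → Ω → Equiv.Perm ι}
  {Z : Ω → ι → α × β} {u : ℝ≥0∞}

theorem measure_permStats_snoc_comp_swap (hX : ∀ b, Measurable (X b)) (hZ : Measurable Z)
    (hXiid : iIndepFun X P) (hXlaw : ∀ b σ, P {ω | X b ω = σ} = u)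
    (hXZ : IndepFun (fun ω b => X b ω) Z P)
    (hQ : ∀ σ, MeasurePreserving (permuteSnd σ) (P.map Z) (P.map Z)) (hT : Measurable T)
    {S : Set (Fin (B + 1) → ℝ)} (hS : MeasurableSet S) (c : Fin B) :
    P {ω | permStats T (Fin.snoc (fun b => X b ω) 1) (Z ω) ∘
        Equiv.swap c.castSucc (Fin.last B) ∈ S} =
      P {ω | permStats T (Fin.snoc (fun b => X b ω) 1) (Z ω) ∈ S} := by
  have hSx : ∀ x : Fin B → Equiv.Perm ι, MeasurableSet {z | permStats T (Fin.snoc x 1) z ∈ S} :=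
    fun x => measurable_permStats hT _ hS
  calc _ = u ^ B * ∑ x, P.map Z
        {z | permStats T (Fin.snoc x 1) z ∘ Equiv.swap c.castSucc (Fin.last B) ∈ S} := by
        simpa using measure_mem_eq_sum_of_iIndepFun hX hZ hXiid hXlaw hXZ (S := fun x =>
          {z | permStats T (Fin.snoc x 1) z ∘ Equiv.swap c.castSucc (Fin.last B) ∈ S})
          fun x => (measurable_pi_lambda _ fun _ => measurable_pi_apply _).comp
            (measurable_permStats hT _) hS
    _ = u ^ B * ∑ x, P.map Z {z | permStats T (Fin.snoc x 1) z ∈ S} := by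
        rw [sum_measure_permStats_snoc_comp_swap hQ hT hS c]
    _ = _ := by
        simpa using (measure_mem_eq_sum_of_iIndepFun hX hZ hXiid hXlaw hXZ hSx).symm

theorem mul_measure_kthSmallest_permStats_lt_le [IsProbabilityMeasure P]
    (hX : ∀ b, Measurable (X b)) (hZ : Measurable Z)
    (hXiid : iIndepFun X P) (hXlaw : ∀ b σ, P {ω | X b ω = σ} = u)
    (hXZ : IndepFun (fun ω b => X b ω) Z P)
    (hQ : ∀ σ, MeasurePreserving (permuteSnd σ) (P.map Z) (P.map Z)) (hT : Measurable T)
    {k : ℕ} (hk : 1 ≤ k) (hkB : k ≤ B + 1) :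
    ((B + 1 : ℕ) : ℝ≥0∞) * P {ω | kthSmallest (permStats T (Fin.snoc (fun b => X b ω) 1) (Z ω)) k <
        permStats T (Fin.snoc (fun b => X b ω) 1) (Z ω) (Fin.last B)} ≤ (B + 1 - k : ℕ) := by
  have hV : Measurable fun ω => permStats T (Fin.snoc (fun b => X b ω) 1) (Z ω) :=
    (measurable_from_prod_countable_right (f := fun p : (Fin B → Equiv.Perm ι) × (ι → α × β) =>
      permStats T (Fin.snoc p.1 1) p.2) fun x => measurable_permStats hT (Fin.snoc x 1)).comp
      ((measurable_pi_lambda _ hX).prodMk hZ)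
  refine mul_measure_kthSmallest_lt_le P hk hkB hV _ fun c => ?_
  induction c using Fin.lastCases with
  | last => rfl
  | cast c =>
    refine (congrArg P ?_).trans (measure_permStats_snoc_comp_swap hX hZ hXiid hXlaw hXZ hQ hT
      (measurableSet_kthSmallest_lt hk hkB (Fin.last B)) c)
    ext ω
    simp [kthSmallest_comp_perm]

end PermutationTest

instance (n : ℕ) : DiscreteMeasurableSpace (Equiv.Perm (Fin n)) :=
  ⟨fun _ => MeasurableSpace.measurableSet_top⟩

@[fun_prop]
theorem Continuous.gaussKernel {d : ℕ} (lam : Fin d → ℝ) {E : Type*} [TopologicalSpace E]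
    {f g : E → Fin d → ℝ} (hf : Continuous f) (hg : Continuous g) :
    Continuous fun a => gaussKernel lam (f a) (g a) := by
  unfold _root_.gaussKernel phiBW gaussDensity
  fun_prop

attribute [local fun_prop] Continuous.if_const

theorem continuous_HSICest (p q n : ℕ) (lam : Fin p → ℝ) (mu : Fin q → ℝ) :
    Continuous (HSICest p q n lam mu) := by
  unfold HSICest
  fun_prop

theorem IsJointDensity.measurable_marg1 {p q : ℕ} {f : (Fin p → ℝ) × (Fin q → ℝ) → ℝ}
    {f1 : (Fin p → ℝ) → ℝ} {f2 : (Fin q → ℝ) → ℝ} (hd : IsJointDensity p q f f1 f2) :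
    Measurable f1 := by
  rw [funext hd.marg1]
  exact hd.meas.stronglyMeasurable.integral_prod_right'.measurable

theorem IsJointDensity.measurable_marg2 {p q : ℕ} {f : (Fin p → ℝ) × (Fin q → ℝ) → ℝ}
    {f1 : (Fin p → ℝ) → ℝ} {f2 : (Fin q → ℝ) → ℝ} (hd : IsJointDensity p q f f1 f2) :
    Measurable f2 := by
  rw [funext hd.marg2]
  exact hd.meas.stronglyMeasurable.integral_prod_left'.measurable

instance {E : Type*} [MeasureSpace E] [SigmaFinite (volume : Measure E)] (f : E → ℝ) :
    SigmaFinite (densMeasure f) :=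
  SigmaFinite.withDensity_ofReal f

-- The absolute values are needed: `f1` and `f2` may both be negative.
theorem densMeasure_mul_eq_prod {α β : Type*} [MeasureSpace α] [MeasureSpace β]
    [SFinite (volume : Measure α)] [SFinite (volume : Measure β)] {f1 : α → ℝ} {f2 : β → ℝ}
    (hf1 : Measurable f1) (hf2 : Measurable f2) (hf : ∀ z : α × β, 0 ≤ f1 z.1 * f2 z.2) :
    densMeasure (fun z : α × β => f1 z.1 * f2 z.2) =
      (densMeasure fun x => |f1 x|).prod (densMeasure fun y => |f2 y|) := by
  rw [densMeasure, densMeasure, densMeasure,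
    prod_withDensity hf1.abs.ennreal_ofReal hf2.abs.ennreal_ofReal, ← Measure.volume_eq_prod]
  congr with z
  rw [← ENNReal.ofReal_mul (abs_nonneg _), ← abs_mul, abs_of_nonneg (hf z)]

theorem IsJointDensity.measurePreserving_permuteSnd {p q n : ℕ} {f1 : (Fin p → ℝ) → ℝ}
    {f2 : (Fin q → ℝ) → ℝ} (hd : IsJointDensity p q (fun z => f1 z.1 * f2 z.2) f1 f2)
    (σ : Equiv.Perm (Fin n)) :
    MeasurePreserving (permuteSnd σ) (sampleLaw n fun z => f1 z.1 * f2 z.2)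
      (sampleLaw n fun z => f1 z.1 * f2 z.2) := by
  rw [sampleLaw, densMeasure_mul_eq_prod hd.measurable_marg1 hd.measurable_marg2 hd.nonneg]
  exact _root_.measurePreserving_permuteSnd _ _ σ

theorem natCast_sub_ceil_le_mul_ofReal {m : ℕ} {α : ℝ} (hα : 0 ≤ α) :
    ((m - ⌈(m : ℝ) * (1 - α)⌉₊ : ℕ) : ℝ≥0∞) ≤ m * ENNReal.ofReal α := by
  have hceil := Nat.le_ceil ((m : ℝ) * (1 - α))
  have hkm : ⌈(m : ℝ) * (1 - α)⌉₊ ≤ m := Nat.ceil_le.mpr (by nlinarith)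
  rw [← ENNReal.ofReal_natCast, ← ENNReal.ofReal_natCast m, ← ENNReal.ofReal_mul (by positivity),
    Nat.cast_sub hkm]
  exact ENNReal.ofReal_le_ofReal (by linarith)

theorem stmt0_general (p q n : ℕ) (B : ℕ)
    (lam : Fin p → ℝ) (mu : Fin q → ℝ)
    (α : ℝ) (hα : α ∈ Set.Ioo (0:ℝ) 1)
    (f1 : (Fin p → ℝ) → ℝ) (f2 : (Fin q → ℝ) → ℝ)
    (hd : IsJointDensity p q (fun z => f1 z.1 * f2 z.2) f1 f2)
    {Ω : Type*} [MeasurableSpace Ω] (P : Measure Ω) [IsProbabilityMeasure P]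
    -- the observed sample, an i.i.d. `n`-sample with common density `f = f_1 ⊗ f_2`
    (Z : Ω → Fin n → (Fin p → ℝ) × (Fin q → ℝ)) (hZmeas : Measurable Z)
    (hZlaw : P.map Z = sampleLaw n (fun z => f1 z.1 * f2 z.2))
    -- `B` i.i.d. uniform random permutations, independent of the sample
    (Perm : Fin B → Ω → Equiv.Perm (Fin n)) (hPmeas : ∀ b, Measurable (Perm b))
    (hPermIid : iIndepFun Perm P)
    (hPermLaw : ∀ (b : Fin B) (σ : Equiv.Perm (Fin n)),
      P {ω | Perm b ω = σ} = (((Nat.factorial n : ℕ) : ℝ≥0∞))⁻¹)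
    (hIndep : IndepFun (fun ω b => Perm b ω) Z P) :
    P {ω |
        kthSmallest (fun b : Fin (B + 1) =>
          if h : (b : ℕ) < B then
            -- the permuted statistics `Ĥ^{⋆b}`
            HSICest p q n lam mu (fun i => ((Z ω i).1, (Z ω ((Perm ⟨b, h⟩ ω) i)).2))
          else
            -- the original statistic `Ĥ^{⋆(B+1)}`
            HSICest p q n lam mu (Z ω))
          (Nat.ceil (((B : ℝ) + 1) * (1 - α)))
        < HSICest p q n lam mu (Z ω)}
      ≤ ENNReal.ofReal α := by
  obtain ⟨hα0, hα1⟩ := hα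
  set k := ⌈((B : ℝ) + 1) * (1 - α)⌉₊
  have hk : 1 ≤ k := Nat.one_le_ceil_iff.mpr (by nlinarith)
  have hkB : k ≤ B + 1 := Nat.ceil_le.mpr (by push_cast; nlinarith)
  have hQ (σ : Equiv.Perm (Fin n)) : MeasurePreserving (permuteSnd σ) (P.map Z) (P.map Z) :=
    hZlaw ▸ hd.measurePreserving_permuteSnd σ
  have hlevel := mul_measure_kthSmallest_permStats_lt_le hPmeas hZmeas hPermIid hPermLaw hIndep
    hQ (continuous_HSICest p q n lam mu).measurable hk hkB
  simp only [permStats_snoc_one, Fin.val_last, lt_irrefl, dite_false] at hlevel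
  refine (ENNReal.mul_le_mul_iff_right (by simp) (by simp)).mp (hlevel.trans ?_)
  simpa using natCast_sub_ceil_le_mul_ofReal (m := B + 1) hα0.le

/-- Proposition 1 of the paper: the permuted HSIC test with Monte Carlo
approximation is of non-asymptotic level `α` under the null hypothesis `f = f_1 ⊗ f_2`,
for every number `B` of permutations. -/
theorem stmt0 (p q n : ℕ) (hp : 0 < p) (hq : 0 < q) (hn : 4 ≤ n) (B : ℕ) (hB : 1 ≤ B)
    (lam : Fin p → ℝ) (mu : Fin q → ℝ) (hlam : ∀ i, 0 < lam i) (hmu : ∀ j, 0 < mu j)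
    (α : ℝ) (hα : α ∈ Set.Ioo (0:ℝ) 1)
    (f1 : (Fin p → ℝ) → ℝ) (f2 : (Fin q → ℝ) → ℝ)
    (hd : IsJointDensity p q (fun z => f1 z.1 * f2 z.2) f1 f2)
    {Ω : Type*} [MeasurableSpace Ω] (P : Measure Ω) [IsProbabilityMeasure P]
    -- the observed sample, an i.i.d. `n`-sample with common density `f = f_1 ⊗ f_2`
    (Z : Ω → Fin n → (Fin p → ℝ) × (Fin q → ℝ)) (hZmeas : Measurable Z)
    (hZlaw : P.map Z = sampleLaw n (fun z => f1 z.1 * f2 z.2))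
    -- `B` i.i.d. uniform random permutations, independent of the sample
    (Perm : Fin B → Ω → Equiv.Perm (Fin n)) (hPmeas : ∀ b, Measurable (Perm b))
    (hPermIid : iIndepFun Perm P)
    (hPermLaw : ∀ (b : Fin B) (σ : Equiv.Perm (Fin n)),
      P {ω | Perm b ω = σ} = (((Nat.factorial n : ℕ) : ℝ≥0∞))⁻¹)
    (hIndep : IndepFun (fun ω b => Perm b ω) Z P) :
    P {ω |
        kthSmallest (fun b : Fin (B + 1) =>
          if h : (b : ℕ) < B then
            -- the permuted statistics `Ĥ^{⋆b}`
            HSICest p q n lam mu (fun i => ((Z ω i).1, (Z ω ((Perm ⟨b, h⟩ ω) i)).2))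
          else
            -- the original statistic `Ĥ^{⋆(B+1)}`
            HSICest p q n lam mu (Z ω))
          (Nat.ceil (((B : ℝ) + 1) * (1 - α)))
        < HSICest p q n lam mu (Z ω)}
      ≤ ENNReal.ofReal α :=
  stmt0_general p q n B lam mu α hα f1 f2 hd P Z hZmeas hZlaw Perm hPmeas hPermIid hPermLaw hIndep
end
end

section
/- Set ψ = f − f_1⊗f_2. Then HSIC_{λ,μ}(f) = ⟨ψ, ψ ∗ (φ_λ ⊗ φ_μ)⟩_{L²(ℝ^{p+q})}, where ∗ denotes convolution and φ_λ ⊗ φ_μ(x,y) = φ_λ(x)φ_μ(y); consequently, HSIC_{λ,μ}(f) = (1/2)·(‖ψ‖_2² + ‖ψ ∗ (φ_λ ⊗ φ_μ)‖_2² − ‖ψ − ψ ∗ (φ_λ ⊗ φ_μ)‖_2²). -/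
/-!
Write `Φ = φ_λ ⊗ φ_μ` and `u = f₁ ⊗ f₂`. Each of the three terms of `HSIC_{λ,μ}(f)` is a pairing
`∫ g · (h ⋆ Φ)`: the first is `⟨f, f ⋆ Φ⟩`, the second `⟨u, u ⋆ Φ⟩` because convolution with a
tensor kernel factorises, the third `⟨f, u ⋆ Φ⟩`. As `Φ` is even and integrable, Fubini makes the
pairing symmetric on bounded integrable functions, so the three terms combine into
`⟨ψ, ψ ⋆ Φ⟩`. The second identity is polarization: `ψ` and `ψ ⋆ Φ` are bounded and (by Young's
inequality) integrable, so all the squares involved are integrable.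
-/

open MeasureTheory ProbabilityTheory Real
open scoped BigOperators ENNReal NNReal

noncomputable section

/-- The convolution `ψ ∗ (φ_λ ⊗ φ_μ)` on `ℝ^p × ℝ^q`. -/
def convPair (p q : ℕ) (psi : (Fin p → ℝ) × (Fin q → ℝ) → ℝ)
    (lam : Fin p → ℝ) (mu : Fin q → ℝ) (z : (Fin p → ℝ) × (Fin q → ℝ)) : ℝ :=
  ∫ w, psi w * (phiBW lam (z.1 - w.1) * phiBW mu (z.2 - w.2))

open ContinuousLinearMap
open scoped Convolution

lemma MeasureTheory.Integrable.sq_of_norm_le {α : Type*} [MeasurableSpace α] {μ : Measure α}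
    {g : α → ℝ} {C : ℝ} (hg : Integrable g μ) (hgC : ∀ x, ‖g x‖ ≤ C) :
    Integrable (fun x => g x ^ 2) μ := by
  simpa only [sq] using hg.bdd_mul hg.aestronglyMeasurable (ae_of_all _ hgC)

lemma integral_mul_eq_half_integral_sq_add_sq_sub_sq {α : Type*} [MeasurableSpace α]
    {μ : Measure α} {a b : α → ℝ} (ha : Integrable (fun x => a x ^ 2) μ)
    (hb : Integrable (fun x => b x ^ 2) μ) (hab : Integrable (fun x => a x * b x) μ) :
    ∫ x, a x * b x ∂μ =
      1 / 2 * ((∫ x, a x ^ 2 ∂μ) + (∫ x, b x ^ 2 ∂μ) - ∫ x, (a x - b x) ^ 2 ∂μ) := by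
  have hsq : (fun x => (a x - b x) ^ 2) = fun x => a x ^ 2 + b x ^ 2 - 2 * (a x * b x) := by
    ext x; ring
  have hab2 : Integrable (fun x => a x ^ 2 + b x ^ 2) μ := ha.add hb
  rw [hsq, integral_sub hab2 (hab.const_mul 2), integral_add ha hb, integral_const_mul]
  ring

section Convolution

variable {G : Type*} [AddGroup G] [MeasurableSpace G] [MeasurableAdd₂ G] {μ : Measure G}
  [μ.IsAddRightInvariant] {g h K : G → ℝ} {C : ℝ}

lemma integrable_comp_sub_left_of_even (hK_even : ∀ x, K (-x) = K x) (hK : Integrable K μ)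
    (z : G) : Integrable (fun t => K (z - t)) μ := by
  simpa only [← neg_sub _ z, hK_even] using hK.comp_sub_right z

lemma convolutionExistsAt_of_norm_le (hK_even : ∀ x, K (-x) = K x)
    (hg : AEStronglyMeasurable g μ) (hgC : ∀ x, ‖g x‖ ≤ C) (hK : Integrable K μ) (z : G) :
    ConvolutionExistsAt g K z (lsmul ℝ ℝ) μ :=
  (integrable_comp_sub_left_of_even hK_even hK z).bdd_mul hg (ae_of_all _ hgC)

lemma norm_convolution_le (hK_even : ∀ x, K (-x) = K x) (hgC : ∀ x, ‖g x‖ ≤ C)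
    (hK : Integrable K μ) (z : G) :
    ‖(g ⋆[lsmul ℝ ℝ, μ] K) z‖ ≤ C * ∫ x, ‖K x‖ ∂μ := by
  calc ‖∫ t, g t * K (z - t) ∂μ‖ ≤ ∫ t, C * ‖K (z - t)‖ ∂μ :=
        norm_integral_le_of_norm_le
          ((integrable_comp_sub_left_of_even hK_even hK z).norm.const_mul C)
          (ae_of_all _ fun t => by
            rw [norm_mul]
            exact mul_le_mul_of_nonneg_right (hgC t) (norm_nonneg _))
    _ = C * ∫ x, ‖K x‖ ∂μ := by
        simp only [← neg_sub _ z, hK_even]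
        rw [integral_const_mul, integral_sub_right_eq_self (fun x => ‖K x‖)]

variable [MeasurableNeg G] [SFinite μ]

lemma integrable_mul_convolution (hg : AEStronglyMeasurable g μ) (hgC : ∀ x, ‖g x‖ ≤ C)
    (hh : Integrable h μ) (hK : Integrable K μ) :
    Integrable (fun z => g z * (h ⋆[lsmul ℝ ℝ, μ] K) z) μ :=
  (hh.integrable_convolution _ hK).bdd_mul hg (ae_of_all _ hgC)

lemma integral_mul_convolution_comm (hK_even : ∀ x, K (-x) = K x)
    (hg : AEStronglyMeasurable g μ) (hgC : ∀ x, ‖g x‖ ≤ C) (hh : Integrable h μ)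
    (hK : Integrable K μ) :
    ∫ z, g z * (h ⋆[lsmul ℝ ℝ, μ] K) z ∂μ = ∫ z, h z * (g ⋆[lsmul ℝ ℝ, μ] K) z ∂μ := by
  have hF : Integrable (fun p : G × G => g p.1 * (h p.2 * K (p.1 - p.2))) (μ.prod μ) :=
    (hh.convolution_integrand (lsmul ℝ ℝ) hK).bdd_mul hg.comp_fst (ae_of_all _ fun p => hgC p.1)
  calc ∫ z, g z * (h ⋆[lsmul ℝ ℝ, μ] K) z ∂μ
      = ∫ p, g p.1 * (h p.2 * K (p.1 - p.2)) ∂μ.prod μ := by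
        rw [integral_prod _ hF]
        simp only [convolution_lsmul, smul_eq_mul, integral_const_mul]
    _ = ∫ w, ∫ z, g z * (h w * K (z - w)) ∂μ ∂μ := integral_prod_symm _ hF
    _ = ∫ z, h z * (g ⋆[lsmul ℝ ℝ, μ] K) z ∂μ := by
        congr 1; ext w
        rw [convolution_lsmul, ← integral_const_mul]
        congr 1; ext z
        rw [smul_eq_mul, ← neg_sub w z, hK_even]
        ring

lemma integral_sub_mul_convolution_sub (hK_even : ∀ x, K (-x) = K x) (hg : Integrable g μ)
    (hgC : ∀ x, ‖g x‖ ≤ C) (hh : Integrable h μ) (hhC : ∀ x, ‖h x‖ ≤ C) (hK : Integrable K μ) :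
    ∫ z, (g z - h z) * ((fun x => g x - h x) ⋆[lsmul ℝ ℝ, μ] K) z ∂μ =
      (∫ z, g z * (g ⋆[lsmul ℝ ℝ, μ] K) z ∂μ) + (∫ z, h z * (h ⋆[lsmul ℝ ℝ, μ] K) z ∂μ)
        - 2 * ∫ z, g z * (h ⋆[lsmul ℝ ℝ, μ] K) z ∂μ := by
  have hconv_sub (z : G) : ((fun x => g x - h x) ⋆[lsmul ℝ ℝ, μ] K) z =
      (g ⋆[lsmul ℝ ℝ, μ] K) z - (h ⋆[lsmul ℝ ℝ, μ] K) z := by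
    simp only [convolution_lsmul, sub_smul]
    exact integral_sub (convolutionExistsAt_of_norm_le hK_even hg.aestronglyMeasurable hgC hK z)
      (convolutionExistsAt_of_norm_le hK_even hh.aestronglyMeasurable hhC hK z)
  have hgg := integrable_mul_convolution hg.aestronglyMeasurable hgC hg hK
  have hgh := integrable_mul_convolution hg.aestronglyMeasurable hgC hh hK
  have hhg := integrable_mul_convolution hh.aestronglyMeasurable hhC hg hK
  have hhh := integrable_mul_convolution hh.aestronglyMeasurable hhC hh hK
  have hgK : Integrable (fun z => g z * (g ⋆[lsmul ℝ ℝ, μ] K) z - h z * (g ⋆[lsmul ℝ ℝ, μ] K) z)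
    μ := hgg.sub hhg
  have hhK : Integrable (fun z => g z * (h ⋆[lsmul ℝ ℝ, μ] K) z - h z * (h ⋆[lsmul ℝ ℝ, μ] K) z)
    μ := hgh.sub hhh
  simp only [hconv_sub, sub_mul, mul_sub]
  rw [integral_sub hgK hhK, integral_sub hgg hhg, integral_sub hgh hhh,
    integral_mul_convolution_comm hK_even hh.aestronglyMeasurable hhC hg hK]
  ring

end Convolution

lemma convolution_prod_mul {G H : Type*} [AddGroup G] [AddGroup H] [MeasurableSpace G]
    [MeasurableSpace H] {μ : Measure G} {ν : Measure H} [SFinite μ] [SFinite ν]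
    (g₁ K₁ : G → ℝ) (g₂ K₂ : H → ℝ) (z : G × H) :
    ((fun w => g₁ w.1 * g₂ w.2) ⋆[lsmul ℝ ℝ, μ.prod ν] fun w => K₁ w.1 * K₂ w.2) z =
      (g₁ ⋆[lsmul ℝ ℝ, μ] K₁) z.1 * (g₂ ⋆[lsmul ℝ ℝ, ν] K₂) z.2 := by
  simp only [convolution_lsmul, smul_eq_mul, Prod.fst_sub, Prod.snd_sub]
  rw [← integral_prod_mul]
  congr 1; ext w; ring

lemma phiBW_neg {d : ℕ} (lam x : Fin d → ℝ) : phiBW lam (-x) = phiBW lam x := by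
  simp [phiBW, gaussDensity, neg_div]

lemma phiBW_eq_mul_prod_exp {d : ℕ} (lam x : Fin d → ℝ) :
    phiBW lam x = (∏ i, lam i)⁻¹ * (√(2 * π))⁻¹ ^ d *
      ∏ i, rexp (-(2 * lam i ^ 2)⁻¹ * x i ^ 2) := by
  rw [phiBW, gaussDensity, ← Real.exp_sum, mul_assoc]
  congr 3
  rw [neg_div, Finset.sum_div, ← Finset.sum_neg_distrib]
  congr 1; ext i
  ring

lemma integrable_phiBW {d : ℕ} (lam : Fin d → ℝ) (hlam : ∀ i, 0 < lam i) :
    Integrable (phiBW lam) := by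
  rw [funext (phiBW_eq_mul_prod_exp lam)]
  exact (Integrable.fintype_prod (f := fun i t => rexp (-(2 * lam i ^ 2)⁻¹ * t ^ 2))
    fun i => integrable_exp_neg_mul_sq (by have := hlam i; positivity)).const_mul _

variable {p q : ℕ}

-- Instance search does not unfold `volume` on a product to `volume.prod volume`.
instance : (volume : Measure ((Fin p → ℝ) × (Fin q → ℝ))).IsAddRightInvariant := by
  rw [Measure.volume_eq_prod]
  infer_instance

def phiBWProd (lam : Fin p → ℝ) (mu : Fin q → ℝ) (z : (Fin p → ℝ) × (Fin q → ℝ)) : ℝ :=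
  phiBW lam z.1 * phiBW mu z.2

lemma phiBWProd_neg (lam : Fin p → ℝ) (mu : Fin q → ℝ) (z : (Fin p → ℝ) × (Fin q → ℝ)) :
    phiBWProd lam mu (-z) = phiBWProd lam mu z := by
  simp only [phiBWProd, Prod.fst_neg, Prod.snd_neg, phiBW_neg]

lemma integrable_phiBWProd {lam : Fin p → ℝ} {mu : Fin q → ℝ} (hlam : ∀ i, 0 < lam i)
    (hmu : ∀ j, 0 < mu j) : Integrable (phiBWProd lam mu) :=
  (integrable_phiBW lam hlam).mul_prod (integrable_phiBW mu hmu)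

lemma convPair_eq_convolution (psi : (Fin p → ℝ) × (Fin q → ℝ) → ℝ) (lam : Fin p → ℝ)
    (mu : Fin q → ℝ) : convPair p q psi lam mu = psi ⋆[lsmul ℝ ℝ] phiBWProd lam mu :=
  rfl

lemma integral_gaussKernel_mul {d : ℕ} (lam : Fin d → ℝ) (g : (Fin d → ℝ) → ℝ) (x : Fin d → ℝ) :
    ∫ x', gaussKernel lam x x' * g x' = (g ⋆[lsmul ℝ ℝ] phiBW lam) x := by
  simp only [convolution_lsmul, smul_eq_mul, gaussKernel, mul_comm]

lemma HSICpop_eq_integral_convolution (lam : Fin p → ℝ) (mu : Fin q → ℝ)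
    (f : (Fin p → ℝ) × (Fin q → ℝ) → ℝ) (f1 : (Fin p → ℝ) → ℝ) (f2 : (Fin q → ℝ) → ℝ) :
    HSICpop p q lam mu f f1 f2 =
      (∫ z, f z * (f ⋆[lsmul ℝ ℝ] phiBWProd lam mu) z)
      + (∫ z, f1 z.1 * f2 z.2 * ((fun w => f1 w.1 * f2 w.2) ⋆[lsmul ℝ ℝ] phiBWProd lam mu) z)
      - 2 * ∫ z, f z * ((fun w => f1 w.1 * f2 w.2) ⋆[lsmul ℝ ℝ] phiBWProd lam mu) z := by
  have hu (z : (Fin p → ℝ) × (Fin q → ℝ)) :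
      ((fun w => f1 w.1 * f2 w.2) ⋆[lsmul ℝ ℝ] phiBWProd lam mu) z =
        (f1 ⋆[lsmul ℝ ℝ] phiBW lam) z.1 * (f2 ⋆[lsmul ℝ ℝ] phiBW mu) z.2 :=
    convolution_prod_mul (μ := volume) (ν := volume) f1 (phiBW lam) f2 (phiBW mu) z
  have hff : ∫ z, ∫ z', gaussKernel lam z.1 z'.1 * gaussKernel mu z.2 z'.2 * (f z * f z') =
      ∫ z, f z * (f ⋆[lsmul ℝ ℝ] phiBWProd lam mu) z := by
    congr 1; ext z
    rw [convolution_lsmul, ← integral_const_mul]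
    congr 1; ext z'
    simp only [gaussKernel, phiBWProd, smul_eq_mul, Prod.fst_sub, Prod.snd_sub]
    ring
  have huu : (∫ x, ∫ x', gaussKernel lam x x' * (f1 x * f1 x')) *
        (∫ y, ∫ y', gaussKernel mu y y' * (f2 y * f2 y')) =
      ∫ z, f1 z.1 * f2 z.2 * ((fun w => f1 w.1 * f2 w.2) ⋆[lsmul ℝ ℝ] phiBWProd lam mu) z := by
    simp only [mul_left_comm (gaussKernel _ _ _), integral_const_mul, integral_gaussKernel_mul,
      hu]
    rw [← integral_prod_mul (μ := volume) (ν := volume)]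
    congr 1; ext z
    ring
  have hfu : ∫ z, (∫ x', gaussKernel lam z.1 x' * f1 x') *
        (∫ y', gaussKernel mu z.2 y' * f2 y') * f z =
      ∫ z, f z * ((fun w => f1 w.1 * f2 w.2) ⋆[lsmul ℝ ℝ] phiBWProd lam mu) z := by
    simp only [integral_gaussKernel_mul, hu, mul_comm (f _)]
  rw [HSICpop, hff, huu, hfu]

namespace IsJointDensity

variable {f : (Fin p → ℝ) × (Fin q → ℝ) → ℝ} {f1 : (Fin p → ℝ) → ℝ} {f2 : (Fin q → ℝ) → ℝ}

lemma integrable (hf : IsJointDensity p q f f1 f2) : Integrable f :=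
  Integrable.of_integral_ne_zero (by rw [hf.int_one]; exact one_ne_zero)

lemma marg1_nonneg (hf : IsJointDensity p q f f1 f2) (x : Fin p → ℝ) : 0 ≤ f1 x := by
  rw [hf.marg1]
  exact integral_nonneg fun y => hf.nonneg _

lemma marg2_nonneg (hf : IsJointDensity p q f f1 f2) (y : Fin q → ℝ) : 0 ≤ f2 y := by
  rw [hf.marg2]
  exact integral_nonneg fun x => hf.nonneg _

lemma integrable_marg_mul (hf : IsJointDensity p q f f1 f2) :
    Integrable (fun z : (Fin p → ℝ) × (Fin q → ℝ) => f1 z.1 * f2 z.2) := by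
  have hf' : Integrable f (volume.prod volume) := hf.integrable
  rw [funext hf.marg1, funext hf.marg2]
  exact hf'.integral_prod_left.mul_prod hf'.integral_prod_right

end IsJointDensity

theorem stmt5_general (p q : ℕ)
    (lam : Fin p → ℝ) (mu : Fin q → ℝ) (hlam : ∀ i, 0 < lam i) (hmu : ∀ j, 0 < mu j)
    (f : (Fin p → ℝ) × (Fin q → ℝ) → ℝ) (f1 : (Fin p → ℝ) → ℝ) (f2 : (Fin q → ℝ) → ℝ)
    (hf : IsJointDensity p q f f1 f2) (M : ℝ)
    (hfb : ∀ z, f z ≤ M) (hf1b : ∀ x, f1 x ≤ M) (hf2b : ∀ y, f2 y ≤ M) :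
    HSICpop p q lam mu f f1 f2 =
      ∫ z, (f z - f1 z.1 * f2 z.2) *
        convPair p q (fun w => f w - f1 w.1 * f2 w.2) lam mu z
    ∧
    HSICpop p q lam mu f f1 f2 =
      (1/2) * ((∫ z, (f z - f1 z.1 * f2 z.2) ^ 2)
        + (∫ z, (convPair p q (fun w => f w - f1 w.1 * f2 w.2) lam mu z) ^ 2)
        - (∫ z, ((f z - f1 z.1 * f2 z.2)
            - convPair p q (fun w => f w - f1 w.1 * f2 w.2) lam mu z) ^ 2)) := by
  have hM : 0 ≤ M := (hf.nonneg 0).trans (hfb 0)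
  have hfC (z : (Fin p → ℝ) × (Fin q → ℝ)) : ‖f z‖ ≤ M + M * M := by
    rw [Real.norm_of_nonneg (hf.nonneg z)]
    exact (hfb z).trans (le_add_of_nonneg_right (mul_self_nonneg M))
  have huC (z : (Fin p → ℝ) × (Fin q → ℝ)) : ‖f1 z.1 * f2 z.2‖ ≤ M + M * M := by
    have h1 := hf.marg1_nonneg z.1
    have h2 := hf.marg2_nonneg z.2
    rw [Real.norm_of_nonneg (mul_nonneg h1 h2)]
    exact (mul_le_mul (hf1b z.1) (hf2b z.2) h2 hM).trans (le_add_of_nonneg_left hM)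
  have hψC (z : (Fin p → ℝ) × (Fin q → ℝ)) : ‖f z - f1 z.1 * f2 z.2‖ ≤ 2 * (M + M * M) :=
    (norm_sub_le _ _).trans (by linarith [hfC z, huC z])
  have hψ : Integrable fun z => f z - f1 z.1 * f2 z.2 := hf.integrable.sub hf.integrable_marg_mul
  have hK := integrable_phiBWProd hlam hmu
  have hHSIC : HSICpop p q lam mu f f1 f2 = ∫ z, (f z - f1 z.1 * f2 z.2) *
      ((fun w => f w - f1 w.1 * f2 w.2) ⋆[lsmul ℝ ℝ] phiBWProd lam mu) z := by
    rw [HSICpop_eq_integral_convolution, integral_sub_mul_convolution_sub (phiBWProd_neg lam mu)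
      hf.integrable hfC hf.integrable_marg_mul huC hK]
  simp only [convPair_eq_convolution]
  refine ⟨hHSIC, hHSIC.trans (integral_mul_eq_half_integral_sq_add_sq_sub_sq
    (hψ.sq_of_norm_le hψC) ?_ (integrable_mul_convolution hψ.aestronglyMeasurable hψC hψ hK))⟩
  exact (hψ.integrable_convolution _ hK).sq_of_norm_le
    (norm_convolution_le (phiBWProd_neg lam mu) hψC hK)

/-- Lemma 2 of the paper: with `ψ = f − f_1⊗f_2`,
`HSIC_{λ,μ}(f) = ⟨ψ, ψ ∗ (φ_λ ⊗ φ_μ)⟩₂`, and consequently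
`HSIC_{λ,μ}(f) = ½(‖ψ‖₂² + ‖ψ ∗ (φ_λ ⊗ φ_μ)‖₂² − ‖ψ − ψ ∗ (φ_λ ⊗ φ_μ)‖₂²)`. -/
theorem stmt5 (p q : ℕ) (hp : 0 < p) (hq : 0 < q)
    (lam : Fin p → ℝ) (mu : Fin q → ℝ) (hlam : ∀ i, 0 < lam i) (hmu : ∀ j, 0 < mu j)
    (f : (Fin p → ℝ) × (Fin q → ℝ) → ℝ) (f1 : (Fin p → ℝ) → ℝ) (f2 : (Fin q → ℝ) → ℝ)
    (hf : IsJointDensity p q f f1 f2) (M : ℝ)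
    (hfb : ∀ z, f z ≤ M) (hf1b : ∀ x, f1 x ≤ M) (hf2b : ∀ y, f2 y ≤ M)
    (hpsiL2 : MeasureTheory.Integrable
      (fun z => (f z - f1 z.1 * f2 z.2) ^ 2) volume) :
    HSICpop p q lam mu f f1 f2 =
      ∫ z, (f z - f1 z.1 * f2 z.2) *
        convPair p q (fun w => f w - f1 w.1 * f2 w.2) lam mu z
    ∧
    HSICpop p q lam mu f f1 f2 =
      (1/2) * ((∫ z, (f z - f1 z.1 * f2 z.2) ^ 2)
        + (∫ z, (convPair p q (fun w => f w - f1 w.1 * f2 w.2) lam mu z) ^ 2)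
        - (∫ z, ((f z - f1 z.1 * f2 z.2)
            - convPair p q (fun w => f w - f1 w.1 * f2 w.2) lam mu z) ^ 2)) :=
  stmt5_general p q lam mu hlam hmu f f1 f2 hf M hfb hf1b hf2b
end
end
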